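/- In the l¹ or l∞ operator norm, K₄ ≤ K₃, i.e. (1/2^ℓ) Σ_{subsets {r₁<⋯<r_n}} ‖W_{(ℓ+1,r_n)}^abs ⋯ W_{(r₁,0)}^abs‖ ≤ ‖W_ℓ^abs W_{ℓ-1}^abs ⋯ W₀^abs‖. -/

import Mathlib

/-- The l¹ operator norm of a matrix: maximum absolute column sum. -/
noncomputable def l1N {m n : ℕ} (A : Matrix (Fin m) (Fin n) ℝ) : ℝ :=
  ⨆ j, ∑ i, |A i j|

/-- The l∞ operator norm of a matrix: maximum absolute row sum. -/
noncomputable def linfN {m n : ℕ} (A : Matrix (Fin m) (Fin n) ℝ) : ℝ :=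
  ⨆ i, ∑ j, |A i j|

/-- Entrywise absolute value of a matrix. -/
def entAbs {m n : ℕ} (A : Matrix (Fin m) (Fin n) ℝ) : Matrix (Fin m) (Fin n) ℝ :=
  fun i j => |A i j|

/-- The chunk product `W (s+k) * ⋯ * W (s+1) * W s`. -/
def Wchunk (a : ℕ → ℕ) (W : ∀ r : ℕ, Matrix (Fin (a (r+1))) (Fin (a r)) ℝ) (s : ℕ) :
    (k : ℕ) → Matrix (Fin (a (s + k + 1))) (Fin (a s)) ℝ
  | 0 => W s
  | k+1 => W (s + k + 1) * Wchunk a W s k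

/-- The chunk product `W_{(t,s)} = W (t-1) * ⋯ * W s` for `s < t`, cast to its natural type. -/
def Wts (a : ℕ → ℕ) (W : ∀ r : ℕ, Matrix (Fin (a (r+1))) (Fin (a r)) ℝ) (s t : ℕ) :
    Matrix (Fin (a t)) (Fin (a s)) ℝ :=
  if h : s < t then
    (Wchunk a W s (t - s - 1)).submatrix
      (Fin.cast (congrArg a (by omega : t = s + (t - s - 1) + 1))) id
  else 0

/-- Given a decreasing list `[r_n, …, r_1]` of cut points, the product
`nn (W_{(t,r_n)}) * nn (W_{(r_n,r_{n-1})}) * ⋯ * nn (W_{(r_1,0)})` of chunk norms. -/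
noncomputable def chunkNormProd (a : ℕ → ℕ)
    (W : ∀ r : ℕ, Matrix (Fin (a (r+1))) (Fin (a r)) ℝ)
    (nn : ∀ m n : ℕ, Matrix (Fin m) (Fin n) ℝ → ℝ) : ℕ → List ℕ → ℝ
  | t, [] => nn (a t) (a 0) (Wts a W 0 t)
  | t, r :: rest => nn (a t) (a r) (Wts a W r t) * chunkNormProd a W nn r rest

/-- The Combettes–Pesquet bound `K₁`, for the norm `nn`. -/
noncomputable def K1 (a : ℕ → ℕ) (W : ∀ r : ℕ, Matrix (Fin (a (r+1))) (Fin (a r)) ℝ)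
    (nn : ∀ m n : ℕ, Matrix (Fin m) (Fin n) ℝ → ℝ) (ℓ : ℕ) : ℝ :=
  (1 / 2 ^ ℓ) * ∑ S ∈ (Finset.Icc 1 ℓ).powerset,
    chunkNormProd a W nn (ℓ + 1) ((S.sort (· ≤ ·)).reverse)

/-- Given a decreasing list `[r_n, …, r_1]` of cut points, the matrix product
`W_{(t,r_n)}^abs * W_{(r_n,r_{n-1})}^abs * ⋯ * W_{(r_1,0)}^abs`. -/
noncomputable def chunkAbsProd (a : ℕ → ℕ)
    (W : ∀ r : ℕ, Matrix (Fin (a (r+1))) (Fin (a r)) ℝ) :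
    (t : ℕ) → List ℕ → Matrix (Fin (a t)) (Fin (a 0)) ℝ
  | t, [] => entAbs (Wts a W 0 t)
  | t, r :: rest => entAbs (Wts a W r t) * chunkAbsProd a W r rest

/-- The bound `K₄`, for the norm `nn`. -/
noncomputable def K4 (a : ℕ → ℕ) (W : ∀ r : ℕ, Matrix (Fin (a (r+1))) (Fin (a r)) ℝ)
    (nn : ∀ m n : ℕ, Matrix (Fin m) (Fin n) ℝ → ℝ) (ℓ : ℕ) : ℝ :=
  (1 / 2 ^ ℓ) * ∑ S ∈ (Finset.Icc 1 ℓ).powerset,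
    nn (a (ℓ+1)) (a 0) (chunkAbsProd a W (ℓ + 1) ((S.sort (· ≤ ·)).reverse))

/-- The product `W ℓ * D ℓ * W (ℓ-1) * D (ℓ-1) * ⋯ * D 1 * W 0`. -/
def chainWD (a : ℕ → ℕ) (W : ∀ r : ℕ, Matrix (Fin (a (r+1))) (Fin (a r)) ℝ)
    (D : ∀ r : ℕ, Matrix (Fin (a r)) (Fin (a r)) ℝ) :
    (k : ℕ) → Matrix (Fin (a (k+1))) (Fin (a 0)) ℝ
  | 0 => W 0
  | k+1 => W (k+1) * (D (k+1) * chainWD a W D k)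

/-- The product `W ℓ ^abs * ⋯ * W 0 ^abs` of the entrywise absolute values. -/
def absWprod (a : ℕ → ℕ) (W : ∀ r : ℕ, Matrix (Fin (a (r+1))) (Fin (a r)) ℝ) :
    (k : ℕ) → Matrix (Fin (a (k+1))) (Fin (a 0)) ℝ
  | 0 => entAbs (W 0)
  | k+1 => entAbs (W (k+1)) * absWprod a W k

/-!
Bounding `|W_{(t,s)}|` entrywise by `W_{t-1}^abs ⋯ W_s^abs`, and using that products of
nonnegative matrices are entrywise monotone, each summand of `K₄` is the norm of a nonnegative
matrix lying entrywise below `W_ℓ^abs ⋯ W_0^abs`. Both operator norms are monotone in the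
absolute values of the entries, so each of the `2^ℓ` summands is at most `K₃`.
-/

section MatrixOrder

variable {α : Type*} [Semiring α] [PartialOrder α] [IsOrderedRing α]
  {l m n : Type*} [Fintype m]

theorem Matrix.mul_apply_le_mul_apply {A A' : Matrix l m α} {B B' : Matrix m n α}
    (hA₀ : ∀ i j, 0 ≤ A i j) (hA : ∀ i j, A i j ≤ A' i j)
    (hB₀ : ∀ i j, 0 ≤ B i j) (hB : ∀ i j, B i j ≤ B' i j) (i : l) (j : n) :
    (A * B) i j ≤ (A' * B') i j :=
  Finset.sum_le_sum fun k _ =>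
    mul_le_mul (hA i k) (hB k j) (hB₀ k j) ((hA₀ i k).trans (hA i k))

theorem Matrix.mul_apply_nonneg {A : Matrix l m α} {B : Matrix m n α}
    (hA : ∀ i j, 0 ≤ A i j) (hB : ∀ i j, 0 ≤ B i j) (i : l) (j : n) :
    0 ≤ (A * B) i j :=
  Finset.sum_nonneg fun k _ => mul_nonneg (hA i k) (hB k j)

end MatrixOrder

theorem entAbs_nonneg {m n : ℕ} (A : Matrix (Fin m) (Fin n) ℝ) (i : Fin m) (j : Fin n) :
    0 ≤ entAbs A i j :=
  abs_nonneg _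

theorem l1N_mono {m n : ℕ} {A B : Matrix (Fin m) (Fin n) ℝ}
    (h : ∀ i j, |A i j| ≤ |B i j|) : l1N A ≤ l1N B :=
  ciSup_mono (Set.finite_range _).bddAbove fun j => Finset.sum_le_sum fun i _ => h i j

theorem linfN_eq_l1N_transpose {m n : ℕ} (A : Matrix (Fin m) (Fin n) ℝ) :
    linfN A = l1N A.transpose :=
  rfl

theorem linfN_mono {m n : ℕ} {A B : Matrix (Fin m) (Fin n) ℝ}
    (h : ∀ i j, |A i j| ≤ |B i j|) : linfN A ≤ linfN B := by
  rw [linfN_eq_l1N_transpose, linfN_eq_l1N_transpose]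
  exact l1N_mono fun j i => h i j

section ChunkProducts

variable (a : ℕ → ℕ) (W : ∀ r : ℕ, Matrix (Fin (a (r+1))) (Fin (a r)) ℝ)

theorem Wchunk_congr (s : ℕ) {k k' : ℕ} (h : k = k') :
    Wchunk a W s k = (Wchunk a W s k').submatrix (Fin.cast (by rw [h])) id := by
  subst h
  rfl

theorem Wts_succ_self (s : ℕ) : Wts a W s (s + 1) = W s := by
  rw [Wts, dif_pos (Nat.lt_succ_self s), Wchunk_congr a W s (show s + 1 - s - 1 = 0 by omega)]
  rfl

theorem Wts_succ {s t : ℕ} (h : s < t) : Wts a W s (t + 1) = W t * Wts a W s t := by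
  obtain ⟨k, rfl⟩ : ∃ k, t = s + k + 1 := ⟨t - s - 1, by omega⟩
  rw [Wts, Wts, dif_pos (by omega), dif_pos h,
    Wchunk_congr a W s (show s + k + 1 + 1 - s - 1 = k + 1 by omega),
    Wchunk_congr a W s (show s + k + 1 - s - 1 = k by omega)]
  ext i j
  simp [Wchunk, Matrix.mul_apply]

theorem Wts_mul {s r t : ℕ} (hsr : s < r) (hrt : r < t) :
    Wts a W r t * Wts a W s r = Wts a W s t := by
  induction t with
  | zero => omega
  | succ t ih =>
    rcases (Nat.lt_succ_iff_lt_or_eq.mp hrt) with hrt | rfl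
    · rw [Wts_succ a W hrt, Wts_succ a W (hsr.trans hrt), Matrix.mul_assoc, ih hrt]
    · rw [Wts_succ_self, Wts_succ a W hsr]

theorem abs_Wchunk_le (s k : ℕ) (i j) :
    |Wchunk a W s k i j| ≤ Wchunk a (fun r => entAbs (W r)) s k i j := by
  induction k with
  | zero => exact le_rfl
  | succ k ih =>
    rw [Wchunk, Wchunk, Matrix.mul_apply, Matrix.mul_apply]
    refine (Finset.abs_sum_le_sum_abs _ _).trans (Finset.sum_le_sum fun x _ => ?_)
    rw [abs_mul]
    exact mul_le_mul_of_nonneg_left (ih x) (abs_nonneg _)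

theorem abs_Wts_le (s t : ℕ) (i j) :
    |Wts a W s t i j| ≤ Wts a (fun r => entAbs (W r)) s t i j := by
  unfold Wts
  split
  · exact abs_Wchunk_le a W s _ _ _
  · simp

theorem Wts_entAbs_zero_succ_eq_absWprod (ℓ : ℕ) :
    Wts a (fun r => entAbs (W r)) 0 (ℓ + 1) = absWprod a W ℓ := by
  induction ℓ with
  | zero => exact Wts_succ_self a _ 0
  | succ ℓ ih =>
    rw [Wts_succ a _ (by omega : 0 < ℓ + 1), ih]
    rfl

theorem chunkAbsProd_nonneg (t : ℕ) (L : List ℕ) (i j) : 0 ≤ chunkAbsProd a W t L i j := by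
  induction L generalizing t j with
  | nil => exact entAbs_nonneg _ i j
  | cons r L ih => exact Matrix.mul_apply_nonneg (entAbs_nonneg _) (ih r) i j

theorem chunkAbsProd_le_Wts_entAbs {t : ℕ} {L : List ℕ} (hL : (t :: L).Pairwise (· > ·))
    (hpos : ∀ r ∈ L, 0 < r) (i j) :
    chunkAbsProd a W t L i j ≤ Wts a (fun r => entAbs (W r)) 0 t i j := by
  induction L generalizing t j with
  | nil => exact abs_Wts_le a W 0 t i j
  | cons r L ih =>
    obtain ⟨hlt, hL⟩ := List.pairwise_cons.mp hL
    have hr : 0 < r := hpos r List.mem_cons_self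
    rw [← Wts_mul a _ hr (hlt r List.mem_cons_self)]
    exact Matrix.mul_apply_le_mul_apply (entAbs_nonneg _) (abs_Wts_le a W r t)
      (chunkAbsProd_nonneg a W r L) (ih hL fun x hx => hpos x (List.mem_cons_of_mem r hx)) i j

theorem chunkAbsProd_le_absWprod {ℓ : ℕ} {S : Finset ℕ} (hS : S ⊆ Finset.Icc 1 ℓ) (i j) :
    chunkAbsProd a W (ℓ + 1) (S.sort (· ≤ ·)).reverse i j ≤ absWprod a W ℓ i j := by
  have hmem : ∀ r ∈ (S.sort (· ≤ ·)).reverse, 1 ≤ r ∧ r ≤ ℓ := fun r hr =>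
    Finset.mem_Icc.mp (hS ((Finset.mem_sort _).mp (List.mem_reverse.mp hr)))
  have hsorted : ((ℓ + 1) :: (S.sort (· ≤ ·)).reverse).Pairwise (· > ·) :=
    List.pairwise_cons.mpr ⟨fun r hr => Nat.lt_succ_of_le (hmem r hr).2,
      List.pairwise_reverse.mpr (Finset.sortedLT_sort S).pairwise⟩
  rw [← Wts_entAbs_zero_succ_eq_absWprod]
  exact chunkAbsProd_le_Wts_entAbs a W hsorted (fun r hr => (hmem r hr).1) i j

theorem K4_le_of_mono (nn : ∀ m n : ℕ, Matrix (Fin m) (Fin n) ℝ → ℝ)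
    (hnn : ∀ m n (A B : Matrix (Fin m) (Fin n) ℝ),
      (∀ i j, |A i j| ≤ |B i j|) → nn m n A ≤ nn m n B)
    (ℓ : ℕ) : K4 a W nn ℓ ≤ nn (a (ℓ + 1)) (a 0) (absWprod a W ℓ) := by
  have hterm : ∀ S ∈ (Finset.Icc 1 ℓ).powerset,
      nn _ _ (chunkAbsProd a W (ℓ + 1) (S.sort (· ≤ ·)).reverse) ≤ nn _ _ (absWprod a W ℓ) :=
    fun S hS => hnn _ _ _ _ fun i j => by
      rw [abs_of_nonneg (chunkAbsProd_nonneg a W _ _ i j)]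
      exact (chunkAbsProd_le_absWprod a W (Finset.mem_powerset.mp hS) i j).trans
        (le_abs_self _)
  have hcard : ((Finset.Icc 1 ℓ).powerset.card : ℝ) = 2 ^ ℓ := by
    simp [Finset.card_powerset]
  calc K4 a W nn ℓ
      ≤ 1 / 2 ^ ℓ * ((Finset.Icc 1 ℓ).powerset.card • nn _ _ (absWprod a W ℓ)) :=
        mul_le_mul_of_nonneg_left (Finset.sum_le_card_nsmul _ _ _ hterm) (by positivity)
    _ = nn _ _ (absWprod a W ℓ) := by
        rw [nsmul_eq_mul, hcard]
        field_simp

end ChunkProducts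

/-- In the l¹ or l∞ operator norm, `K₄ ≤ K₃ = ‖W ℓ^abs ⋯ W 0^abs‖`. -/
theorem K4_le_K3
    (a : ℕ → ℕ) (ℓ : ℕ) (W : ∀ r : ℕ, Matrix (Fin (a (r+1))) (Fin (a r)) ℝ) :
    K4 a W (fun _ _ A => l1N A) ℓ ≤ l1N (absWprod a W ℓ) ∧
    K4 a W (fun _ _ A => linfN A) ℓ ≤ linfN (absWprod a W ℓ) :=
  ⟨K4_le_of_mono a W _ (fun _ _ _ _ => l1N_mono) ℓ,
    K4_le_of_mono a W _ (fun _ _ _ _ => linfN_mono) ℓ⟩
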